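/- arXiv:2307.04860 — 5 statements merged into one kernel-verified Lean document; each statement's English description precedes it below -/
import Mathlib

section
/- Let Ω be a topological space, 𝒜 a linear space of continuous real-valued functions on Ω, and ℱ the complete lattice cone generated by 𝒜. Then for every subset S ⊆ Ω, clConv_ℱ S = {ω ∈ Ω : a(ω) ≤ sup a(S) for all a ∈ 𝒜}. -/
open Filter Topology Set

/-- A complete lattice cone of `(-∞,∞]`-valued functions: a convex cone
stable under pointwise suprema of arbitrary families. -/
def IsCLC {X : Type} (K : Set (X → EReal)) : Prop :=
  (∀ f ∈ K, ∀ g ∈ K, ∀ α β : ℝ, 0 ≤ α → 0 ≤ β →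
    (fun x => (α : EReal) * f x + (β : EReal) * g x) ∈ K) ∧
  ∀ (ι : Type) (F : ι → X → EReal), (∀ i, F i ∈ K) → (fun x => ⨆ i, F i x) ∈ K

/-- The complete lattice cone generated by a family of real-valued functions. -/
def genCLC {X : Type} (A : Set (X → ℝ)) : Set (X → EReal) :=
  ⋂₀ {K | IsCLC K ∧ ∀ a ∈ A, (fun x => ((a x : ℝ) : EReal)) ∈ K}

/-- `A` is a linear space of real-valued functions. -/
def IsLinSpace {X : Type} (A : Set (X → ℝ)) : Prop :=
  (fun _ => (0 : ℝ)) ∈ A ∧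
  ∀ a ∈ A, ∀ b ∈ A, ∀ α β : ℝ, (fun x => α * a x + β * b x) ∈ A

/-!
Every `f ∈ ℱ` is the pointwise supremum of its minorants in `𝒜`: the functions with this
property form a complete lattice cone containing `𝒜`. Hence if `ω` satisfies
`a ω ≤ sup a(S)` for all `a ∈ 𝒜`, then `f ω ≤ sup_{a ≤ f} sup a(S) ≤ sup f(S)`.
The converse inclusion holds because `𝒜 ⊆ ℱ`.
-/

def IsPointedCone {X : Type} (A : Set (X → ℝ)) : Prop :=
  (fun _ => (0 : ℝ)) ∈ A ∧
  ∀ a ∈ A, ∀ b ∈ A, ∀ α β : ℝ, 0 ≤ α → 0 ≤ β → (fun x => α * a x + β * b x) ∈ A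

theorem IsLinSpace.isPointedCone {X : Type} {A : Set (X → ℝ)} (hA : IsLinSpace A) :
    IsPointedCone A :=
  ⟨hA.1, fun a ha b hb α β _ _ => hA.2 a ha b hb α β⟩

theorem coe_mem_genCLC {X : Type} {A : Set (X → ℝ)} {a : X → ℝ} (ha : a ∈ A) :
    (fun x => ((a x : ℝ) : EReal)) ∈ genCLC A :=
  fun _ hK => hK.2 a ha

def minorants {X : Type} (A : Set (X → ℝ)) (f : X → EReal) : Set (X → ℝ) :=
  {a ∈ A | ∀ x, ((a x : ℝ) : EReal) ≤ f x}

def IsSupOfMinorants {X : Type} (A : Set (X → ℝ)) (f : X → EReal) : Prop :=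
  ∀ x, f x ≤ ⨆ a ∈ minorants A f, ((a x : ℝ) : EReal)

namespace IsSupOfMinorants

variable {X : Type} {A : Set (X → ℝ)}

theorem coe_of_mem {a : X → ℝ} (ha : a ∈ A) : IsSupOfMinorants A fun x => ((a x : ℝ) : EReal) :=
  fun x => le_biSup (fun b : X → ℝ => ((b x : ℝ) : EReal)) ⟨ha, fun _ => le_rfl⟩

theorem iSup {ι : Type} {F : ι → X → EReal} (hF : ∀ i, IsSupOfMinorants A (F i)) :
    IsSupOfMinorants A fun x => ⨆ i, F i x := by
  have minorants_mono : ∀ i, minorants A (F i) ⊆ minorants A fun x => ⨆ i, F i x :=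
    fun i a ⟨haA, ha⟩ => ⟨haA, fun y => (ha y).trans (le_iSup (fun i => F i y) i)⟩
  exact fun x => iSup_le fun i => (hF i x).trans (biSup_mono (minorants_mono i))

theorem exists_lt_smul_minorant (h0 : (fun _ => (0 : ℝ)) ∈ A) {f : X → EReal}
    (hf : IsSupOfMinorants A f) {α : ℝ} (hα : 0 ≤ α) {x : X} {c : ℝ}
    (hc : (c : EReal) < α * f x) :
    ∃ a ∈ A, (∀ y, ((α * a y : ℝ) : EReal) ≤ α * f y) ∧ c < α * a x := by
  rcases hα.eq_or_lt with rfl | hα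
  · refine ⟨_, h0, fun y => ?_, ?_⟩ <;> simp_all
  have hcf : ((c / α : ℝ) : EReal) < f x := by
    by_contra! hle
    have := mul_le_mul_of_nonneg_left hle (EReal.coe_nonneg.2 hα.le)
    rw [← EReal.coe_mul, mul_div_cancel₀ c hα.ne'] at this
    exact hc.not_ge this
  obtain ⟨a, ⟨haA, hmin⟩, hca⟩ := lt_biSup_iff.1 (hcf.trans_le (hf x))
  refine ⟨a, haA, fun y => ?_, ?_⟩
  · rw [EReal.coe_mul]
    exact mul_le_mul_of_nonneg_left (hmin y) (EReal.coe_nonneg.2 hα.le)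
  · rw [EReal.coe_lt_coe_iff, div_lt_iff₀ hα] at hca
    linarith

theorem smul_add (hA : IsPointedCone A) {f g : X → EReal} (hf : IsSupOfMinorants A f)
    (hg : IsSupOfMinorants A g) {α β : ℝ} (hα : 0 ≤ α) (hβ : 0 ≤ β) :
    IsSupOfMinorants A fun x => (α : EReal) * f x + (β : EReal) * g x := by
  intro x
  refine EReal.add_le_of_forall_lt fun u hu v hv => ?_
  obtain ⟨c, huc, hc⟩ := EReal.lt_iff_exists_real_btwn.1 hu
  obtain ⟨d, hvd, hd⟩ := EReal.lt_iff_exists_real_btwn.1 hv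
  obtain ⟨a, haA, ha, hca⟩ := hf.exists_lt_smul_minorant hA.1 hα hc
  obtain ⟨b, hbA, hb, hdb⟩ := hg.exists_lt_smul_minorant hA.1 hβ hd
  have hmin : (fun y => α * a y + β * b y) ∈ minorants A fun x => α * f x + β * g x :=
    ⟨hA.2 a haA b hbA α β hα hβ, fun y => by
      rw [EReal.coe_add]
      exact add_le_add (ha y) (hb y)⟩
  calc u + v ≤ c + d := add_le_add huc.le hvd.le
    _ ≤ ((α * a x + β * b x : ℝ) : EReal) := by
      rw [← EReal.coe_add, EReal.coe_le_coe_iff]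
      linarith
    _ ≤ _ := le_biSup (fun e : X → ℝ => ((e x : ℝ) : EReal)) hmin

theorem isCLC (hA : IsPointedCone A) : IsCLC {f : X → EReal | IsSupOfMinorants A f} :=
  ⟨fun _ hf _ hg _ _ hα hβ => smul_add hA hf hg hα hβ, fun _ _ hF => iSup hF⟩

theorem of_mem_genCLC (hA : IsPointedCone A) {f : X → EReal} (hf : f ∈ genCLC A) :
    IsSupOfMinorants A f :=
  hf _ ⟨isCLC hA, fun _ ha => coe_of_mem ha⟩

theorem le_biSup_of_le_biSup {f : X → EReal} (hf : IsSupOfMinorants A f) {S : Set X} {ω : X}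
    (hω : ∀ a ∈ A, ((a ω : ℝ) : EReal) ≤ ⨆ s ∈ S, ((a s : ℝ) : EReal)) :
    f ω ≤ ⨆ s ∈ S, f s :=
  (hf ω).trans <| iSup₂_le fun a ⟨haA, hmin⟩ =>
    (hω a haA).trans <| iSup₂_mono fun s _ => hmin s

end IsSupOfMinorants

theorem stmt2_general {Ω : Type} (A : Set (Ω → ℝ))
    (hA : IsLinSpace A) (S : Set Ω) :
    {ω | ∀ f ∈ genCLC A, f ω ≤ ⨆ s ∈ S, f s}
      = {ω | ∀ a ∈ A, ((a ω : ℝ) : EReal) ≤ ⨆ s ∈ S, ((a s : ℝ) : EReal)} := by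
  ext ω
  exact ⟨fun h a ha => h _ (coe_mem_genCLC ha), fun h f hf =>
    (IsSupOfMinorants.of_mem_genCLC hA.isPointedCone hf).le_biSup_of_le_biSup h⟩

/-- The closed `ℱ`-convex hull of `S`, for `ℱ` the complete lattice cone
generated by a linear space `𝒜` of continuous functions, equals the set cut
out by the inequalities `a(ω) ≤ sup a(S)`, `a ∈ 𝒜`. -/
theorem stmt2 {Ω : Type} [TopologicalSpace Ω] (A : Set (Ω → ℝ))
    (hA : IsLinSpace A) (hcont : ∀ a ∈ A, Continuous a) (S : Set Ω) :
    {ω | ∀ f ∈ genCLC A, f ω ≤ ⨆ s ∈ S, f s}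
      = {ω | ∀ a ∈ A, ((a ω : ℝ) : EReal) ≤ ⨆ s ∈ S, ((a s : ℝ) : EReal)} :=
  stmt2_general A hA S
end

section
/- Let Ω be a topological space, ℬ a complex algebra of continuous complex-valued functions on Ω containing constants and closed in the compact-open topology, and let 𝒜 = {Re b : b ∈ ℬ}. Let ℱ be the complete lattice cone generated by 𝒜. Then for every compact K ⊆ Ω and every C ≥ 1: clConv_ℱ K = {ω ∈ Ω : Re b(ω) ≤ C · sup_K |b| for all b ∈ ℬ} = {ω ∈ Ω : |b(ω)| ≤ C · sup_K |b| for all b ∈ ℬ}. -/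
/-!
Every function in the lattice cone generated by `Re ℬ` is a pointwise supremum of functions
`Re b` with `b ∈ ℬ`, since such suprema already form a complete lattice cone. Hence the closed
hull of `K` is cut out by the inequalities `Re b(ω) ≤ sup_K Re b`, which imply
`Re b(ω) ≤ C · sup_K |b|`; rotating `b` by a unimodular constant turns this into
`|b(ω)| ≤ C · sup_K |b|`. Conversely, `exp (n b)` lies in the closed algebra `ℬ`, and the last
inequality applied to it reads `exp (n Re b(ω)) ≤ C · exp (n sup_K Re b)` for every `n`, which
forces `Re b(ω) ≤ sup_K Re b`.
-/

open Filter Topology Set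

namespace EReal

lemma iSup_coe_add_iSup_coe {ι ι' : Type*} (u : ι → ℝ) (v : ι' → ℝ) :
    (⨆ i, (u i : EReal)) + ⨆ j, (v j : EReal) = ⨆ p : ι × ι', ((u p.1 + v p.2 : ℝ) : EReal) := by
  apply le_antisymm
  · refine add_le_of_forall_lt fun s hs t ht => ?_
    obtain ⟨i, hi⟩ := lt_iSup_iff.1 hs
    obtain ⟨j, hj⟩ := lt_iSup_iff.1 ht
    calc s + t ≤ ((u i + v j : ℝ) : EReal) := by rw [coe_add]; exact add_le_add hi.le hj.le
      _ ≤ _ := le_iSup (fun p : ι × ι' => ((u p.1 + v p.2 : ℝ) : EReal)) (i, j)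
  · refine iSup_le fun p => ?_
    rw [coe_add]
    exact add_le_add (le_iSup (fun i => (u i : EReal)) p.1) (le_iSup (fun j => (v j : EReal)) p.2)

lemma coe_mul_iSup_coe {ι : Type*} {β : ℝ} (hβ : 0 < β) (u : ι → ℝ) :
    (β : EReal) * ⨆ i, (u i : EReal) = ⨆ i, ((β * u i : ℝ) : EReal) := by
  have hβ' : (0 : EReal) < β := EReal.coe_pos.2 hβ
  apply le_antisymm
  · rw [mul_comm, ← le_div_iff_mul_le hβ' (coe_ne_top β)]
    refine iSup_le fun i => ?_
    rw [le_div_iff_mul_le hβ' (coe_ne_top β), mul_comm, ← coe_mul]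
    exact le_iSup (fun i => ((β * u i : ℝ) : EReal)) i
  · refine iSup_le fun i => ?_
    rw [coe_mul]
    exact mul_le_mul_of_nonneg_left (le_iSup (fun i => (u i : EReal)) i) hβ'.le

end EReal

section LatticeCone

variable {X : Type}

def iSupClosure (A : Set (X → ℝ)) : Set (X → EReal) :=
  {f | ∃ (ι : Type) (a : ι → X → ℝ), (∀ i, a i ∈ A) ∧ f = fun x => ⨆ i, (a i x : EReal)}

variable (P : PointedCone ℝ (X → ℝ))

lemma smul_mem_iSupClosure {f : X → EReal} (hf : f ∈ iSupClosure (P : Set (X → ℝ))) {α : ℝ}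
    (hα : 0 ≤ α) :
    (fun x => (α : EReal) * f x) ∈ iSupClosure (P : Set (X → ℝ)) := by
  obtain ⟨ι, a, ha, rfl⟩ := hf
  rcases hα.eq_or_lt with rfl | hα
  -- `0 * ⊥ = 0` in `EReal`, so an empty family has to be replaced by the zero function.
  · exact ⟨PUnit, fun _ => 0, fun _ => P.zero_mem, by simp⟩
  · refine ⟨ι, fun i => α • a i, fun i => P.smul_mem hα.le (ha i), ?_⟩
    funext x
    exact EReal.coe_mul_iSup_coe hα _

lemma isCLC_iSupClosure : IsCLC (iSupClosure (P : Set (X → ℝ))) := by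
  refine ⟨fun f hf g hg α β hα hβ => ?_, fun ι F hF => ?_⟩
  · obtain ⟨ι, a, ha, hfa⟩ := smul_mem_iSupClosure P hf hα
    obtain ⟨ι', c, hc, hgc⟩ := smul_mem_iSupClosure P hg hβ
    refine ⟨ι × ι', fun p => a p.1 + c p.2, fun p => P.add_mem (ha p.1) (hc p.2), ?_⟩
    funext x
    rw [congrFun hfa x, congrFun hgc x]
    exact EReal.iSup_coe_add_iSup_coe _ _
  · choose κ a ha hFa using hF
    refine ⟨Σ i, κ i, fun p => a p.1 p.2, fun p => ha p.1 p.2, ?_⟩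
    funext x
    simp only [iSup_sigma, hFa]

lemma genCLC_subset_iSupClosure : genCLC (P : Set (X → ℝ)) ⊆ iSupClosure (P : Set (X → ℝ)) :=
  fun _ hf => hf _ ⟨isCLC_iSupClosure P, fun a ha => ⟨PUnit, fun _ => a, fun _ => ha, by simp⟩⟩

theorem forall_mem_genCLC_le_biSup_iff (x : X) (K : Set X) :
    (∀ f ∈ genCLC (P : Set (X → ℝ)), f x ≤ ⨆ k ∈ K, f k) ↔
      ∀ a ∈ P, (a x : EReal) ≤ ⨆ k ∈ K, (a k : EReal) := by
  refine ⟨fun h a ha => h _ fun _ hK => hK.2 a ha, fun h f hf => ?_⟩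
  obtain ⟨ι, a, ha, rfl⟩ := genCLC_subset_iSupClosure P hf
  calc ⨆ i, (a i x : EReal) ≤ ⨆ i, ⨆ k ∈ K, (a i k : EReal) := iSup_mono fun i => h _ (ha i)
    _ = ⨆ k ∈ K, ⨆ i, (a i k : EReal) := iSup_comm.trans (iSup_congr fun _ => iSup_comm)

end LatticeCone

lemma Real.le_of_forall_exp_nat_mul_le {x y C : ℝ} (hC : 0 < C)
    (h : ∀ n : ℕ, Real.exp (n * x) ≤ C * Real.exp (n * y)) : x ≤ y := by
  by_contra! hxy
  obtain ⟨n, hn⟩ := exists_nat_gt (Real.log C / (x - y))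
  have hlog := h n
  rw [← Real.exp_log hC, ← Real.exp_add, Real.exp_le_exp] at hlog
  rw [div_lt_iff₀ (sub_pos.2 hxy)] at hn
  nlinarith

lemma Complex.exists_norm_eq_one_mul_eq_norm (z : ℂ) : ∃ θ : ℂ, ‖θ‖ = 1 ∧ θ * z = ‖z‖ := by
  refine ⟨exp (-arg z * I), by simpa using norm_exp_ofReal_mul_I (-arg z), ?_⟩
  conv_lhs => rw [← norm_mul_exp_arg_mul_I z]
  rw [mul_left_comm, ← exp_add]
  simp

lemma re_le_mul_biSup_norm_of_re_le_biSup {Ω : Type} {K : Set Ω} {g : Ω → ℂ} {ω : Ω} {C : ℝ}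
    (hC : 1 ≤ C)
    (h : ((g ω).re : EReal) ≤ ⨆ k ∈ K, ((g k).re : EReal)) :
    ((g ω).re : EReal) ≤ C * ⨆ k ∈ K, (‖g k‖ : EReal) := by
  rcases K.eq_empty_or_nonempty with rfl | ⟨k₀, hk₀⟩
  · simp at h
  have hnonneg : 0 ≤ ⨆ k ∈ K, (‖g k‖ : EReal) :=
    (EReal.coe_nonneg.2 (norm_nonneg _)).trans (le_biSup (fun k => (‖g k‖ : EReal)) hk₀)
  calc ((g ω).re : EReal) ≤ ⨆ k ∈ K, ((g k).re : EReal) := h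
    _ ≤ ⨆ k ∈ K, (‖g k‖ : EReal) :=
      iSup₂_mono fun k _ => EReal.coe_le_coe_iff.2 (Complex.re_le_norm _)
    _ = (1 : ℝ) * ⨆ k ∈ K, (‖g k‖ : EReal) := by rw [EReal.coe_one, one_mul]
    _ ≤ C * ⨆ k ∈ K, (‖g k‖ : EReal) :=
      mul_le_mul_of_nonneg_right (EReal.coe_le_coe_iff.2 hC) hnonneg

section ContinuousFunctions

open scoped Nat

variable {Ω : Type} [TopologicalSpace Ω]

lemma ContinuousMap.hasSum_expSeries {𝕜 : Type*} [RCLike 𝕜] (b : C(Ω, 𝕜)) :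
    HasSum (fun n : ℕ => (n !⁻¹ : 𝕜) • b ^ n)
      ⟨NormedSpace.exp ∘ b, NormedSpace.exp_continuous.comp b.continuous⟩ := by
  rw [HasSum, ContinuousMap.tendsto_iff_forall_isCompact_tendstoUniformlyOn]
  intro K hK
  obtain ⟨R, hR⟩ := hK.exists_bound_of_continuousOn b.continuous.continuousOn
  have := tendstoUniformlyOn_tsum (Real.summable_pow_div_factorial R)
    (f := fun n x => (n !⁻¹ : 𝕜) • b x ^ n) (s := K) fun n x hx => by
      rw [norm_smul, norm_pow, div_eq_inv_mul, norm_inv, RCLike.norm_natCast]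
      gcongr
      exact hR x hx
  simpa [NormedSpace.exp_eq_tsum 𝕜, Function.comp_def] using this

lemma Subalgebra.exp_comp_mem {𝕜 : Type*} [RCLike 𝕜] {B : Subalgebra 𝕜 C(Ω, 𝕜)}
    (hB : IsClosed (B : Set C(Ω, 𝕜))) {b : C(Ω, 𝕜)} (hb : b ∈ B) :
    (⟨NormedSpace.exp ∘ b, NormedSpace.exp_continuous.comp b.continuous⟩ : C(Ω, 𝕜)) ∈ B := by
  rw [← (ContinuousMap.hasSum_expSeries b).tsum_eq]
  exact tsum_mem hB fun n => B.smul_mem (B.pow_mem hb n) _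

def Submodule.realParts (B : Submodule ℂ C(Ω, ℂ)) : Submodule ℝ (Ω → ℝ) where
  carrier := {f | ∃ b ∈ B, ∀ ω, f ω = (b ω).re}
  zero_mem' := ⟨0, B.zero_mem, by simp⟩
  add_mem' := by
    rintro _ _ ⟨b, hb, hfb⟩ ⟨c, hc, hgc⟩
    exact ⟨b + c, B.add_mem hb hc, by simp [hfb, hgc]⟩
  smul_mem' := by
    rintro t _ ⟨b, hb, hfb⟩
    exact ⟨(t : ℂ) • b, B.smul_mem _ hb, by simp [hfb]⟩

lemma norm_le_mul_biSup_norm_of_re_le {S : Type*} [SetLike S C(Ω, ℂ)] [SMulMemClass S ℂ C(Ω, ℂ)]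
    {B : S} {K : Set Ω} {c : EReal} {ω : Ω}
    (h : ∀ b ∈ B, ((b ω).re : EReal) ≤ c * ⨆ k ∈ K, (‖b k‖ : EReal)) :
    ∀ b ∈ B, (‖b ω‖ : EReal) ≤ c * ⨆ k ∈ K, (‖b k‖ : EReal) := by
  intro b hb
  obtain ⟨θ, hθ, hθb⟩ := Complex.exists_norm_eq_one_mul_eq_norm (b ω)
  simpa [hθb, hθ] using h (θ • b) (SMulMemClass.smul_mem θ hb)

lemma re_le_biSup_re_of_norm_le {B : Subalgebra ℂ C(Ω, ℂ)} (hB : IsClosed (B : Set C(Ω, ℂ)))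
    {K : Set Ω} (hK : IsCompact K) {C : ℝ} (hC : 0 < C) {ω : Ω}
    (h : ∀ b ∈ B, (‖b ω‖ : EReal) ≤ C * ⨆ k ∈ K, (‖b k‖ : EReal)) :
    ∀ b ∈ B, ((b ω).re : EReal) ≤ ⨆ k ∈ K, ((b k).re : EReal) := by
  intro b hb
  rcases K.eq_empty_or_nonempty with rfl | hKne
  · simpa [EReal.coe_mul_bot_of_pos hC] using h 0 B.zero_mem
  obtain ⟨k₀, hk₀, hmax⟩ :=
    hK.exists_isMaxOn hKne (Complex.continuous_re.comp b.continuous).continuousOn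
  refine (EReal.coe_le_coe_iff.2 ?_).trans (le_biSup (fun k => ((b k).re : EReal)) hk₀)
  refine Real.le_of_forall_exp_nat_mul_le hC fun n => ?_
  let e : C(Ω, ℂ) := ⟨NormedSpace.exp ∘ ((n : ℂ) • b),
    NormedSpace.exp_continuous.comp ((n : ℂ) • b).continuous⟩
  have he : e ∈ B := Subalgebra.exp_comp_mem hB (B.smul_mem hb _)
  have hnorm : ∀ x, ‖e x‖ = Real.exp (n * (b x).re) := fun x => by
    simp [e, ← Complex.exp_eq_exp_ℂ, Complex.norm_exp]
  have hsup : ⨆ k ∈ K, (‖e k‖ : EReal) ≤ (Real.exp (n * (b k₀).re) : EReal) :=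
    iSup₂_le fun k hk => by
      rw [hnorm, EReal.coe_le_coe_iff, Real.exp_le_exp]
      exact mul_le_mul_of_nonneg_left (hmax hk) n.cast_nonneg
  have := (h e he).trans (mul_le_mul_of_nonneg_left hsup (EReal.coe_nonneg.2 hC.le))
  rw [hnorm, ← EReal.coe_mul] at this
  exact_mod_cast this

end ContinuousFunctions

/-- For a complex algebra `ℬ` of continuous functions containing constants and
closed in the compact-open topology, `𝒜 = Re ℬ` and `ℱ` the complete lattice
cone generated by `𝒜`, for every compact `K` and `C ≥ 1` the closed
`ℱ`-convex hull of `K` equals `{ω : Re b(ω) ≤ C·sup_K |b| ∀ b ∈ ℬ}` which in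
turn equals `{ω : |b(ω)| ≤ C·sup_K |b| ∀ b ∈ ℬ}`. -/
theorem stmt7 {Ω : Type} [TopologicalSpace Ω]
    (B : Subalgebra ℂ C(Ω, ℂ)) (hclosed : IsClosed (B : Set C(Ω, ℂ)))
    (A : Set (Ω → ℝ)) (hA : A = {f | ∃ b ∈ B, ∀ ω, f ω = (b ω).re})
    (K : Set Ω) (hK : IsCompact K) (C : ℝ) (hC : 1 ≤ C) :
    {ω | ∀ f ∈ genCLC A, f ω ≤ ⨆ k ∈ K, f k}
        = {ω | ∀ b ∈ B, (((b ω).re : ℝ) : EReal)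
            ≤ (C : EReal) * ⨆ k ∈ K, ((‖b k‖ : ℝ) : EReal)}
    ∧ {ω | ∀ b ∈ B, (((b ω).re : ℝ) : EReal)
            ≤ (C : EReal) * ⨆ k ∈ K, ((‖b k‖ : ℝ) : EReal)}
        = {ω | ∀ b ∈ B, ((‖b ω‖ : ℝ) : EReal)
            ≤ (C : EReal) * ⨆ k ∈ K, ((‖b k‖ : ℝ) : EReal)} := by
  have hCpos : 0 < C := zero_lt_one.trans_le hC
  have hA' : A = ((Subalgebra.toSubmodule B).realParts : PointedCone ℝ (Ω → ℝ)) := hA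
  have hhull : ∀ ω, (∀ f ∈ genCLC A, f ω ≤ ⨆ k ∈ K, f k) ↔
      ∀ b ∈ B, ((b ω).re : EReal) ≤ ⨆ k ∈ K, ((b k).re : EReal) := fun ω => by
    rw [hA', forall_mem_genCLC_le_biSup_iff]
    refine ⟨fun h b hb => h _ ⟨b, hb, fun _ => rfl⟩, ?_⟩
    rintro h a ⟨b, hb, hab⟩
    simpa only [hab] using h b hb
  refine ⟨Set.ext fun ω => (hhull ω).trans ⟨?_, ?_⟩, Set.ext fun ω => ⟨?_, ?_⟩⟩
  · exact fun h b hb => re_le_mul_biSup_norm_of_re_le_biSup hC (h b hb)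
  · exact fun h => re_le_biSup_re_of_norm_le hclosed hK hCpos (norm_le_mul_biSup_norm_of_re_le h)
  · exact norm_le_mul_biSup_norm_of_re_le
  · exact fun h b hb => (EReal.coe_le_coe_iff.2 (Complex.re_le_norm _)).trans (h b hb)
end

section
/- Let Ω be a topological space exhaustible by compacta, and let 𝒜 be a linear space of continuous real-valued functions on Ω containing constants. Suppose that for every compact K ⊆ Ω and every C ≥ 1 the set {ω ∈ Ω : a(ω) ≤ C·sup|a|(K) for all a ∈ 𝒜} is compact. Then there exists a continuous, non-negative, proper function p : Ω → [0,∞) which is the pointwise supremum of a symmetric family (a_α) of functions in 𝒜, and which on every compact subset equals the maximum of finitely many of the a_α. -/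
/-!
Refine the exhaustion to `L` so that the `(i + 1)`-hull of `L i` lies in the interior of
`L (i + 1)`. A point `x` of the annulus `L (i + 2) \ int L (i + 1)` then lies outside that hull,
so some `a ∈ 𝒜` exceeds `(i + 1) · sup_{L i} |a|` at `x`; rescaled, `a` equals `i + 1` at `x` and
is smaller than `1` in absolute value on `L i`. By compactness finitely many such functions
exceed `i` on the whole annulus. Let `p` be the supremum of `±1` and of `±` all these functions.
On `L N` only the finitely many functions built for annuli of index `< N` can exceed `1`, so `p`
is locally a finite maximum, hence continuous; and `p > i` on the `i`-th annulus, so `p` is proper.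
-/

open Filter Topology Set

def ProperFn {Ω : Type} [TopologicalSpace Ω] (p : Ω → ℝ) : Prop :=
  ∀ S : Set ℝ, IsCompact S → IsCompact (p ⁻¹' S)

open scoped Pointwise

section IsLinSpace

variable {Ω : Type} {A : Set (Ω → ℝ)} {a : Ω → ℝ}

theorem IsLinSpace.smul_mem (hA : IsLinSpace A) (ha : a ∈ A) (c : ℝ) : c • a ∈ A := by
  convert hA.2 a ha a ha c 0 using 1
  ext x
  simp

theorem IsLinSpace.neg_mem (hA : IsLinSpace A) (ha : a ∈ A) : -a ∈ A := by
  simpa using hA.smul_mem ha (-1)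

end IsLinSpace

namespace CompactExhaustion

variable {X : Type*} [TopologicalSpace X]

theorem weaklyLocallyCompactSpace (K : CompactExhaustion X) : WeaklyLocallyCompactSpace X :=
  ⟨fun x => let ⟨n, hn⟩ := K.exists_mem_nhds x; ⟨K n, K.isCompact n, hn⟩⟩

theorem exists_subset_interior_succ (K : CompactExhaustion X) (F : ℕ → Set X → Set X)
    (hF : ∀ i S, IsCompact S → IsCompact (F i S)) :
    ∃ L : CompactExhaustion X, ∀ i, F i (L i) ⊆ interior (L (i + 1)) := by
  choose N hN using fun i j => K.exists_superset_of_isCompact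
    (((K.isCompact j).union (hF i _ (K.isCompact j))).union (K.isCompact i))
  let m : ℕ → ℕ := fun i => Nat.rec 0 (fun i mi => N i mi + 1) i
  have hm : ∀ i, K (m i) ∪ F i (K (m i)) ∪ K i ⊆ interior (K (m (i + 1))) := fun i =>
    (hN i (m i)).trans (K.subset_interior_succ _)
  refine ⟨⟨fun i => K (m i), fun i => K.isCompact _,
    fun i => subset_union_left.trans (subset_union_left.trans (hm i)), ?_⟩, fun i => ?_⟩
  · refine eq_univ_of_forall fun x => mem_iUnion.2 ⟨K.find x + 1, ?_⟩
    exact interior_subset (hm _ (subset_union_right (K.mem_find x)))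
  · exact subset_union_right.trans (subset_union_left.trans (hm i))

theorem exists_mem_diff_interior (K : CompactExhaustion X) {x : X} {n : ℕ}
    (hx : x ∉ K (n + 1)) : ∃ i, n ≤ i ∧ x ∈ K (i + 2) \ interior (K (i + 1)) := by
  rw [K.mem_iff_find_le, not_le] at hx
  refine ⟨K.find x - 2, by omega, ?_, fun hint => ?_⟩
  · exact K.mem_iff_find_le.2 (by omega)
  · have := K.mem_iff_find_le.1 (interior_subset hint)
    omega

end CompactExhaustion

theorem properFn_of_forall_sublevel_subset {X : Type} [TopologicalSpace X] {p : X → ℝ}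
    (hp : Continuous p) (h : ∀ R : ℝ, ∃ L, IsCompact L ∧ {x | p x ≤ R} ⊆ L) : ProperFn p := by
  intro S hS
  obtain ⟨R, hR⟩ := hS.bddAbove
  obtain ⟨L, hL, hsub⟩ := h R
  exact hL.of_isClosed_subset (hS.isClosed.preimage hp) fun x hx => hsub (hR hx)

theorem IsCompact.exists_finite_forall_exists_lt {X : Type*} [TopologicalSpace X] {K : Set X}
    (hK : IsCompact K) {P : Set (X → ℝ)} (hP : ∀ f ∈ P, Continuous f) {r : ℝ}
    (hcover : ∀ x ∈ K, ∃ f ∈ P, r < f x) : ∃ Φ ⊆ P, Φ.Finite ∧ ∀ x ∈ K, ∃ f ∈ Φ, r < f x := by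
  obtain ⟨Φ, hΦP, hΦ, hKΦ⟩ := hK.elim_finite_subcover_image (c := fun f : X → ℝ => {x | r < f x})
    (fun f hf => (hP f hf).isOpen_preimage _ isOpen_Ioi) fun x hx => by
      obtain ⟨f, hf, hfx⟩ := hcover x hx
      exact mem_biUnion hf hfx
  exact ⟨Φ, hΦP, hΦ, fun x hx => by simpa using hKΦ hx⟩

section LocallyFiniteSup

variable {X ι : Type*} [TopologicalSpace X] {g : ι → X → ℝ}

def IsLocallyFiniteSup (g : ι → X → ℝ) : Prop :=
  ∀ M : Set X, IsCompact M → ∃ s : Finset ι, ∃ hs : s.Nonempty,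
    ∀ x ∈ M, ∀ i, g i x ≤ s.sup' hs fun i => g i x

namespace IsLocallyFiniteSup

variable (h : IsLocallyFiniteSup g)
include h

theorem nonempty : Nonempty ι :=
  let ⟨_, ⟨i, _⟩, _⟩ := h ∅ isCompact_empty; ⟨i⟩

theorem bddAbove (x : X) : BddAbove (range fun i => g i x) := by
  obtain ⟨s, hs, hle⟩ := h {x} isCompact_singleton
  exact ⟨_, forall_mem_range.2 (hle x rfl)⟩

theorem ciSup_eq_sup' {M : Set X} (hM : IsCompact M) :
    ∃ s : Finset ι, ∃ hs : s.Nonempty, ∀ x ∈ M, ⨆ i, g i x = s.sup' hs fun i => g i x := by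
  have := h.nonempty
  obtain ⟨s, hs, hle⟩ := h M hM
  refine ⟨s, hs, fun x hx => (ciSup_le (hle x hx)).antisymm ?_⟩
  exact Finset.sup'_le hs _ fun i _ => le_ciSup (h.bddAbove x) i

theorem continuous [WeaklyLocallyCompactSpace X] (hg : ∀ i, Continuous (g i)) :
    Continuous fun x => ⨆ i, g i x := by
  refine continuous_iff_continuousAt.2 fun x => ?_
  obtain ⟨M, hM, hMx⟩ := exists_compact_mem_nhds x
  obtain ⟨s, hs, hsup⟩ := h.ciSup_eq_sup' hM
  refine (ContinuousAt.finset_sup'_apply hs fun i _ => (hg i).continuousAt).congr ?_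
  filter_upwards [hMx] with y hy using (hsup y hy).symm

theorem coe_ciSup (x : X) : ((⨆ i, g i x : ℝ) : EReal) = ⨆ i, ((g i x : ℝ) : EReal) := by
  have := h.nonempty
  exact Monotone.map_ciSup_of_continuousAt continuous_coe_real_ereal.continuousAt
    EReal.coe_strictMono.monotone (h.bddAbove x)

end IsLocallyFiniteSup

theorem isLocallyFiniteSup_subtype_val {T : Set (X → ℝ)} (h1 : 1 ∈ T)
    (hT : ∀ M, IsCompact M → {f ∈ T | ∃ x ∈ M, 1 < |f x|}.Finite) :
    IsLocallyFiniteSup fun f : T => (f : X → ℝ) := by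
  classical
  intro M hM
  have hbad : (Subtype.val ⁻¹' {f ∈ T | ∃ x ∈ M, 1 < |f x|} : Set T).Finite :=
    (hT M hM).preimage Subtype.val_injective.injOn
  refine ⟨insert ⟨1, h1⟩ hbad.toFinset, Finset.insert_nonempty _ _, fun x hx f => ?_⟩
  by_cases hf : f ∈ hbad.toFinset
  · exact Finset.le_sup' (fun f : T => f.1 x) (Finset.mem_insert_of_mem hf)
  · have hfx : |f.1 x| ≤ 1 := by
      simp only [Finite.mem_toFinset, mem_preimage, mem_ofPred_eq, Subtype.coe_prop,
        true_and, not_exists, not_and, not_lt] at hf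
      exact hf x hx
    exact (le_of_abs_le hfx).trans
      (Finset.le_sup' (fun f : T => f.1 x) (Finset.mem_insert_self ⟨1, h1⟩ _))

end LocallyFiniteSup

section Hull

variable {Ω : Type} {A : Set (Ω → ℝ)} {C : ℝ} {K : Set Ω} {ω : Ω}

def scaledHull (A : Set (Ω → ℝ)) (C : ℝ) (K : Set Ω) : Set Ω :=
  {ω | ∀ a ∈ A, ((a ω : ℝ) : EReal) ≤ (C : EReal) * ⨆ k ∈ K, ((|a k| : ℝ) : EReal)}

theorem exists_forall_mul_abs_lt_of_notMem_scaledHull (hC : 0 ≤ C)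
    (hω : ω ∉ scaledHull A C K) : ∃ a ∈ A, ∀ k ∈ K, C * |a k| < a ω := by
  simp only [scaledHull, mem_ofPred_eq, not_forall, not_le] at hω
  obtain ⟨a, ha, hlt⟩ := hω
  refine ⟨a, ha, fun k hk => EReal.coe_lt_coe_iff.1 (lt_of_le_of_lt ?_ hlt)⟩
  rw [EReal.coe_mul]
  exact mul_le_mul_of_nonneg_left (le_iSup₂_of_le k hk le_rfl) (EReal.coe_nonneg.2 hC)

theorem exists_mem_eq_forall_abs_lt_one_of_notMem_scaledHull (hA : IsLinSpace A)
    (hconst : ∀ c : ℝ, (fun _ : Ω => c) ∈ A) (hC : 0 ≤ C) (hω : ω ∉ scaledHull A C K) :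
    ∃ b ∈ A, b ω = C ∧ ∀ k ∈ K, |b k| < 1 := by
  rcases K.eq_empty_or_nonempty with rfl | ⟨k₀, hk₀⟩
  · exact ⟨fun _ => C, hconst C, rfl, by simp⟩
  obtain ⟨a, ha, hlt⟩ := exists_forall_mul_abs_lt_of_notMem_scaledHull hC hω
  have haω : 0 < a ω := (mul_nonneg hC (abs_nonneg _)).trans_lt (hlt k₀ hk₀)
  refine ⟨(C / a ω) • a, hA.smul_mem ha _, div_mul_cancel₀ C haω.ne', fun k hk => ?_⟩
  rw [Pi.smul_apply, smul_eq_mul, abs_mul, abs_of_nonneg (div_nonneg hC haω.le),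
    div_mul_eq_mul_div, div_lt_one haω]
  exact hlt k hk

theorem exists_finite_peak_cover [TopologicalSpace Ω] (hA : IsLinSpace A)
    (hcont : ∀ a ∈ A, Continuous a) (hconst : ∀ c : ℝ, (fun _ : Ω => c) ∈ A)
    (L : CompactExhaustion Ω)
    (hL : ∀ i : ℕ, scaledHull A (i + 1) (L i) ⊆ interior (L (i + 1))) (i : ℕ) :
    ∃ Φ ⊆ A, Φ.Finite ∧ (∀ f ∈ Φ, ∀ x ∈ L i, |f x| < 1) ∧
      ∀ x ∈ L (i + 2) \ interior (L (i + 1)), ∃ f ∈ Φ, (i : ℝ) < f x := by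
  have hann : IsCompact (L (i + 2) \ interior (L (i + 1))) :=
    (L.isCompact _).diff isOpen_interior
  obtain ⟨Φ, hΦP, hΦ, hcover⟩ := hann.exists_finite_forall_exists_lt
    (P := {f ∈ A | ∀ x ∈ L i, |f x| < 1}) (r := i) (fun f hf => hcont f hf.1) fun x hx => by
      obtain ⟨b, hbA, hbx, hb⟩ := exists_mem_eq_forall_abs_lt_one_of_notMem_scaledHull hA hconst
        (by positivity) fun h => hx.2 (hL i h)
      exact ⟨b, ⟨hbA, hb⟩, by linarith⟩
  exact ⟨Φ, fun f hf => (hΦP hf).1, hΦ, fun f hf => (hΦP hf).2, hcover⟩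

end Hull

section SymmFamily

variable {X : Type*} {Φ : ℕ → Set (X → ℝ)} {f : X → ℝ}

def symmFamily (Φ : ℕ → Set (X → ℝ)) : Set (X → ℝ) :=
  {1, -1} ∪ ⋃ i, (Φ i ∪ -Φ i)

theorem one_mem_symmFamily : 1 ∈ symmFamily Φ :=
  Or.inl (Or.inl rfl)

theorem mem_symmFamily_of_mem {i : ℕ} (hf : f ∈ Φ i) : f ∈ symmFamily Φ :=
  Or.inr (mem_iUnion.2 ⟨i, Or.inl hf⟩)

theorem neg_mem_symmFamily (hf : f ∈ symmFamily Φ) : -f ∈ symmFamily Φ := by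
  rcases hf with (rfl | rfl) | hf
  · exact Or.inl (Or.inr rfl)
  · exact Or.inl (Or.inl (neg_neg _))
  · obtain ⟨i, hf⟩ := mem_iUnion.1 hf
    exact Or.inr (mem_iUnion.2 ⟨i, hf.symm.imp Set.mem_neg.1 neg_mem_neg.2⟩)

theorem symmFamily_subset {Ω : Type} {Φ : ℕ → Set (Ω → ℝ)} {A : Set (Ω → ℝ)}
    (hA : IsLinSpace A) (h1 : (1 : Ω → ℝ) ∈ A) (hΦ : ∀ i, Φ i ⊆ A) : symmFamily Φ ⊆ A := by
  rintro f ((rfl | rfl) | hf)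
  · exact h1
  · exact hA.neg_mem h1
  · obtain ⟨i, hf | hf⟩ := mem_iUnion.1 hf
    · exact hΦ i hf
    · simpa using hA.neg_mem (hΦ i hf)

theorem CompactExhaustion.isLocallyFiniteSup_symmFamily [TopologicalSpace X]
    (L : CompactExhaustion X) (hfin : ∀ i, (Φ i).Finite)
    (hlt : ∀ i, ∀ f ∈ Φ i, ∀ x ∈ L i, |f x| < 1) :
    IsLocallyFiniteSup fun f : symmFamily Φ => (f : X → ℝ) := by
  refine isLocallyFiniteSup_subtype_val one_mem_symmFamily fun M hM => ?_
  obtain ⟨N, hN⟩ := L.exists_superset_of_isCompact hM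
  refine ((finite_Iio N).biUnion fun i _ => (hfin i).union (hfin i).neg).subset ?_
  rintro f ⟨(rfl | rfl) | hf, x, hx, hfx⟩
  · simp at hfx
  · simp at hfx
  obtain ⟨i, hi⟩ := mem_iUnion.1 hf
  refine mem_biUnion (mem_Iio.2 <| not_le.1 fun hNi => hfx.not_ge ?_) hi
  have hx' := L.subset hNi (hN hx)
  rcases hi with hi | hi
  · exact (hlt i f hi x hx').le
  · simpa using (hlt i _ hi x hx').le

end SymmFamily

/-- Existence of a continuous non-negative proper exhaustion function which is
the supremum of a symmetric family of members of `𝒜` and on every compact set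
a maximum of finitely many of them, assuming `Ω` is exhaustible by compacta
and all the hulls `{ω : a(ω) ≤ C·sup|a|(K) ∀ a ∈ 𝒜}` are compact. -/
theorem stmt9 {Ω : Type} [TopologicalSpace Ω]
    (hex : ∃ K : ℕ → Set Ω, (∀ i, IsCompact (K i)) ∧ (⋃ i, K i) = Set.univ ∧
      ∀ i, K i ⊆ interior (K (i + 1)))
    (A : Set (Ω → ℝ)) (hA : IsLinSpace A) (hcont : ∀ a ∈ A, Continuous a)
    (hconst : ∀ c : ℝ, (fun _ : Ω => c) ∈ A)
    (hcpt : ∀ K : Set Ω, IsCompact K → ∀ C : ℝ, 1 ≤ C →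
      IsCompact {ω | ∀ a ∈ A,
        ((a ω : ℝ) : EReal) ≤ (C : EReal) * ⨆ k ∈ K, ((|a k| : ℝ) : EReal)}) :
    ∃ p : Ω → ℝ, Continuous p ∧ (∀ ω, 0 ≤ p ω) ∧ ProperFn p ∧
      ∃ (ι : Type) (g : ι → Ω → ℝ),
        (∀ i, g i ∈ A) ∧
        (∀ i, ∃ j, g j = fun ω => - g i ω) ∧
        (∀ ω, (p ω : EReal) = ⨆ i, ((g i ω : ℝ) : EReal)) ∧
        (∀ K : Set Ω, IsCompact K → ∃ s : Finset ι, ∃ hs : s.Nonempty,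
          ∀ ω ∈ K, p ω = s.sup' hs fun i => g i ω) := by
  obtain ⟨K, hKc, hKu, hKi⟩ := hex
  let K' : CompactExhaustion Ω := ⟨K, hKc, hKi, hKu⟩
  have := K'.weaklyLocallyCompactSpace
  obtain ⟨L, hL⟩ := K'.exists_subset_interior_succ (fun i => scaledHull A (i + 1))
    fun i S hS => hcpt S hS _ (by simp)
  choose Φ hΦA hΦfin hΦlt hΦcover using exists_finite_peak_cover hA hcont hconst L hL
  have hTA := symmFamily_subset hA (hconst 1) hΦA
  have hsup := L.isLocallyFiniteSup_symmFamily hΦfin hΦlt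
  have hp := hsup.continuous fun f => hcont _ (hTA f.2)
  have hle : ∀ x, ∀ f ∈ symmFamily Φ, f x ≤ ⨆ f : symmFamily Φ, (f : Ω → ℝ) x :=
    fun x f hf => le_ciSup (hsup.bddAbove x) (⟨f, hf⟩ : symmFamily Φ)
  refine ⟨_, hp, fun x => zero_le_one.trans (hle x 1 one_mem_symmFamily), ?_, symmFamily Φ,
    Subtype.val, fun f => hTA f.2, fun f => ⟨⟨-f, neg_mem_symmFamily f.2⟩, rfl⟩,
    hsup.coe_ciSup, fun M hM => hsup.ciSup_eq_sup' hM⟩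
  refine properFn_of_forall_sublevel_subset hp fun R =>
    ⟨L (⌈R⌉₊ + 1), L.isCompact _, fun x hx => by_contra fun hxL => ?_⟩
  obtain ⟨i, hi, hxi⟩ := L.exists_mem_diff_interior hxL
  obtain ⟨f, hf, hfx⟩ := hΦcover i x hxi
  have hRi : R ≤ i := (Nat.le_ceil R).trans (mod_cast hi)
  exact (hfx.trans_le (hle x f (mem_symmFamily_of_mem hf))).not_ge (hx.trans hRi)
end

section
/- Let Ω be a topological space, ℱ a convex cone of continuous functions on Ω containing constants and satisfying the maximum principle, and 𝒢 the complete lattice cone generated by ℱ. Suppose there exist compact ℱ-convex sets K₁ ⊊ int K₂, K_i ⊊ int K_{i+1} for all i, with ⋃ K_i = Ω. Then there exists a continuous, proper, non-negative function p ∈ 𝒢 such that on each compact subset of Ω, p equals the maximum of finitely many functions of the form max(αf + β, 0) with f ∈ ℱ. -/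
open Filter Topology Set

/-- `F` is a convex cone of real-valued functions. -/
def IsConvexConeFn {X : Type} (F : Set (X → ℝ)) : Prop :=
  ∀ f ∈ F, ∀ g ∈ F, ∀ α β : ℝ, 0 ≤ α → 0 ≤ β →
    (fun x => α * f x + β * g x) ∈ F

/-- `F` satisfies the maximum principle. -/
def MaxPrin {Ω : Type} [TopologicalSpace Ω] (F : Set (Ω → ℝ)) : Prop :=
  ∀ f ∈ F, (∃ x y, f x ≠ f y) →
    ∀ K U : Set Ω, IsCompact K → IsOpen U → K ⊆ U →
      (⨆ k ∈ K, ((f k : ℝ) : EReal)) < ⨆ u ∈ U, ((f u : ℝ) : EReal)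

/-- A set is `F`-convex if it coincides with its closed `F`-convex hull. -/
def FConvexSet {Ω : Type} [TopologicalSpace Ω] (F : Set (Ω → ℝ)) (K : Set Ω) : Prop :=
  K = {ω | ∀ f ∈ F, ((f ω : ℝ) : EReal) ≤ ⨆ k ∈ K, ((f k : ℝ) : EReal)}

/-!
Since each `K i` is `F`-convex, a point outside `K i` is separated from it by some `f ∈ F`, and
rescaling gives a ramp `max (α f + β) 0` that vanishes on `K i` and is as large as we like near
that point. By compactness, finitely many such ramps vanish on `K i` and exceed `i` on the shell
`K (i + 2) \ int K (i + 1)`. Let `p` be the supremum of all ramps of all levels. On `K n` only the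
finitely many ramps of level `< n` can be nonzero, so `p` is locally a finite maximum of ramps,
hence continuous; `p > i` off `K (i + 1)`, so `p` is proper; and `p` lies in the complete lattice
cone generated by `F` because each ramp does.
-/

section GeneratedCone

variable {X : Type} {A : Set (X → ℝ)}

lemma isCLC_genCLC (A : Set (X → ℝ)) : IsCLC (genCLC A) :=
  ⟨fun f hf g hg α β hα hβ => mem_sInter.2 fun _ hS =>
      hS.1.1 f (mem_sInter.1 hf _ hS) g (mem_sInter.1 hg _ hS) α β hα hβ,
    fun ι r hr => mem_sInter.2 fun _ hS => hS.1.2 ι r fun i => mem_sInter.1 (hr i) _ hS⟩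

lemma mem_genCLC_of_mem {a : X → ℝ} (ha : a ∈ A) :
    (fun x => ((a x : ℝ) : EReal)) ∈ genCLC A :=
  mem_sInter.2 fun _ hS => hS.2 a ha

lemma sup_mem_genCLC {f g : X → EReal} (hf : f ∈ genCLC A) (hg : g ∈ genCLC A) :
    (fun x => f x ⊔ g x) ∈ genCLC A := by
  have h := (isCLC_genCLC A).2 Bool (fun b => if b then f else g) (Bool.rec hg hf)
  simpa only [iSup_bool_eq, if_true, Bool.false_eq_true, if_false] using h

lemma coe_ciSup_mem_genCLC (h0 : (fun _ => (0 : ℝ)) ∈ A) {ι : Type} {r : ι → X → ℝ}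
    (hr : ∀ i, (fun x => ((r i x : ℝ) : EReal)) ∈ genCLC A)
    (hbdd : ∀ x, BddAbove (range fun i => r i x)) :
    (fun x => ((⨆ i, r i x : ℝ) : EReal)) ∈ genCLC A := by
  cases isEmpty_or_nonempty ι
  · simpa only [Real.iSup_of_isEmpty] using mem_genCLC_of_mem h0
  · have hcoe :
        (fun x => ((⨆ i, r i x : ℝ) : EReal)) = fun x => ⨆ i, ((r i x : ℝ) : EReal) :=
      funext fun x => Monotone.map_ciSup_of_continuousAt continuous_coe_real_ereal.continuousAt
        EReal.coe_strictMono.monotone (hbdd x)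
    rw [hcoe]
    exact (isCLC_genCLC A).2 ι _ hr

end GeneratedCone

section Ramps

variable {Ω : Type} {F : Set (Ω → ℝ)}

def IsRamp (F : Set (Ω → ℝ)) (g : Ω → ℝ) : Prop :=
  ∃ f ∈ F, ∃ α β : ℝ, 0 ≤ α ∧ ∀ ω, g ω = max (α * f ω + β) 0

lemma IsRamp.nonneg {g : Ω → ℝ} (hg : IsRamp F g) (ω : Ω) : 0 ≤ g ω := by
  obtain ⟨f, -, α, β, -, hg⟩ := hg
  exact hg ω ▸ le_max_right _ _

lemma IsRamp.continuous [TopologicalSpace Ω] (hcont : ∀ f ∈ F, Continuous f) {g : Ω → ℝ}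
    (hg : IsRamp F g) : Continuous g := by
  obtain ⟨f, hf, α, β, -, hg⟩ := hg
  rw [funext hg]
  have := hcont f hf
  fun_prop

lemma IsRamp.coe_mem_genCLC (hcone : IsConvexConeFn F) (hconst : ∀ c : ℝ, (fun _ : Ω => c) ∈ F)
    {g : Ω → ℝ} (hg : IsRamp F g) : (fun ω => ((g ω : ℝ) : EReal)) ∈ genCLC F := by
  obtain ⟨f, hf, α, β, hα, hg⟩ := hg
  have haff : (fun ω => α * f ω + β) ∈ F := by
    simpa using hcone f hf _ (hconst β) α 1 hα zero_le_one
  have hcoe : (fun ω => ((g ω : ℝ) : EReal)) =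
      fun ω => ((α * f ω + β : ℝ) : EReal) ⊔ ((0 : ℝ) : EReal) := by
    funext ω
    rw [hg ω]
    exact EReal.coe_strictMono.monotone.map_max
  rw [hcoe]
  exact sup_mem_genCLC (mem_genCLC_of_mem haff) (mem_genCLC_of_mem (hconst 0))

end Ramps

section Separation

variable {Ω : Type} [TopologicalSpace Ω] {F : Set (Ω → ℝ)} {K : Set Ω}

lemma FConvexSet.exists_separating (hK : FConvexSet F K) {ω : Ω} (hω : ω ∉ K) :
    ∃ f ∈ F, ∃ c : ℝ, (∀ k ∈ K, f k ≤ c) ∧ c < f ω := by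
  rw [hK] at hω
  simp only [mem_ofPred_eq, not_forall, not_le, exists_prop] at hω
  obtain ⟨f, hf, hlt⟩ := hω
  obtain ⟨c, hKc, hcω⟩ := EReal.exists_between_coe_real hlt
  refine ⟨f, hf, c, fun k hk => ?_, EReal.coe_lt_coe_iff.1 hcω⟩
  exact EReal.coe_le_coe_iff.1 <|
    (le_iSup₂ (f := fun k (_ : k ∈ K) => ((f k : ℝ) : EReal)) k hk).trans hKc.le

lemma FConvexSet.exists_isRamp (hK : FConvexSet F K) {ω : Ω} (hω : ω ∉ K) (M : ℝ) :
    ∃ g, IsRamp F g ∧ (∀ k ∈ K, g k = 0) ∧ M < g ω := by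
  obtain ⟨f, hf, c, hfK, hcω⟩ := hK.exists_separating hω
  have hgap : 0 < f ω - c := sub_pos.2 hcω
  set α := (|M| + 1) / (f ω - c)
  have hα : 0 < α := by positivity
  refine ⟨fun x => max (α * f x + -(α * c)) 0, ⟨f, hf, α, -(α * c), hα.le, fun _ => rfl⟩,
    fun k hk => max_eq_right ?_, ?_⟩
  · nlinarith [hfK k hk]
  · have : α * (f ω - c) = |M| + 1 := div_mul_cancel₀ _ hgap.ne'
    refine lt_max_of_lt_left ?_
    linarith [le_abs_self M]

lemma FConvexSet.exists_finset_isRamp (hcont : ∀ f ∈ F, Continuous f) (hK : FConvexSet F K)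
    {L : Set Ω} (hL : IsCompact L) (hLK : Disjoint L K) (M : ℝ) :
    ∃ s : Finset (Ω → ℝ), (∀ g ∈ s, IsRamp F g ∧ ∀ k ∈ K, g k = 0) ∧
      ∀ ω ∈ L, ∃ g ∈ s, M < g ω := by
  classical
  choose! g hg hgK hgω using fun ω (hω : ω ∈ L) =>
    hK.exists_isRamp (disjoint_left.1 hLK hω) M
  have hnhds : ∀ ω ∈ L, {x | M < g ω x} ∈ 𝓝 ω := fun ω hω =>
    (isOpen_lt continuous_const ((hg ω hω).continuous hcont)).mem_nhds (hgω ω hω)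
  obtain ⟨t, htL, hLt⟩ := hL.elim_nhds_subcover _ hnhds
  refine ⟨t.image g, ?_, fun ω hω => ?_⟩
  · simp only [Finset.forall_mem_image]
    exact fun x hx => ⟨hg x (htL x hx), hgK x (htL x hx)⟩
  · obtain ⟨x, hxt, hωx⟩ := mem_iUnion₂.1 (hLt hω)
    exact ⟨g x, Finset.mem_image_of_mem g hxt, hωx⟩

end Separation

section FiniteSup

variable {ι : Type*} {f : ι → ℝ} {J : Set ι}

lemma bddAbove_range_of_eq_zero_of_notMem (hJ : J.Finite) (h : ∀ i ∉ J, f i = 0) :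
    BddAbove (range f) := by
  refine ((hJ.image f).insert 0).bddAbove.mono ?_
  rintro _ ⟨i, rfl⟩
  by_cases hi : i ∈ J
  · exact mem_insert_of_mem _ (mem_image_of_mem f hi)
  · exact h i hi ▸ mem_insert _ _

lemma ciSup_eq_ciSup_subtype_of_eq_zero_of_notMem (hf : ∀ i, 0 ≤ f i) (hJ : J.Finite)
    (h : ∀ i ∉ J, f i = 0) : ⨆ i, f i = ⨆ j : J, f j := by
  have hbddJ : BddAbove (range fun j : J => f j) := hJ.to_subtype.bddAbove_range _
  refine le_antisymm (Real.iSup_le (fun i => ?_) (Real.iSup_nonneg fun j => hf j))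
    (Real.iSup_le (fun j => le_ciSup (bddAbove_range_of_eq_zero_of_notMem hJ h) j)
      (Real.iSup_nonneg hf))
  by_cases hi : i ∈ J
  · exact le_ciSup hbddJ ⟨i, hi⟩
  · exact h i hi ▸ Real.iSup_nonneg fun j => hf j

lemma continuous_ciSup_of_finite {Ω : Type*} [TopologicalSpace Ω] [Finite ι] {r : ι → Ω → ℝ}
    (hr : ∀ i, Continuous (r i)) : Continuous fun ω => ⨆ i, r i ω := by
  cases isEmpty_or_nonempty ι
  · simpa only [Real.iSup_of_isEmpty] using continuous_const
  · have := Fintype.ofFinite ι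
    simp_rw [← Finset.sup'_univ_eq_ciSup]
    exact Continuous.finset_sup'_apply _ fun i _ => hr i

lemma finite_setOf_sigma_fst_lt {α : ℕ → Type*} [∀ i, Finite (α i)] (n : ℕ) :
    {x : Σ i, α i | x.1 < n}.Finite :=
  (finite_Iio n).preimage' fun i _ => range_sigmaMk i ▸ finite_range _

end FiniteSup

section Exhaustion

variable {Ω : Type} {K : ℕ → Set Ω} {ι : Type*} {r : ι → Ω → ℝ} {level : ι → ℕ}

lemma ciSup_eq_ciSup_level_lt_of_mem (hK : Monotone K) (hr : ∀ x ω, 0 ≤ r x ω)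
    (hrK : ∀ x, ∀ ω ∈ K (level x), r x ω = 0) {n : ℕ} (hfin : {x | level x < n}.Finite)
    {ω : Ω} (hω : ω ∈ K n) : ⨆ x, r x ω = ⨆ x : {x | level x < n}, r x ω :=
  ciSup_eq_ciSup_subtype_of_eq_zero_of_notMem (hr · ω) hfin fun x hx =>
    hrK x ω (hK (not_lt.1 hx) hω)

lemma bddAbove_range_apply_of_level (hK : Monotone K) (hKu : ⋃ n, K n = univ)
    (hrK : ∀ x, ∀ ω ∈ K (level x), r x ω = 0) (hfin : ∀ n, {x | level x < n}.Finite) (ω : Ω) :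
    BddAbove (range fun x => r x ω) :=
  have ⟨n, hn⟩ := mem_iUnion.1 (hKu ▸ mem_univ ω)
  bddAbove_range_of_eq_zero_of_notMem (hfin n) fun x hx => hrK x ω (hK (not_lt.1 hx) hn)

variable [TopologicalSpace Ω]

lemma monotone_of_subset_interior (hK : ∀ n, K n ⊆ interior (K (n + 1))) : Monotone K :=
  monotone_nat_of_le_succ fun n => (hK n).trans interior_subset

lemma exists_mem_diff_interior_of_notMem (hK : Monotone K) (hKu : ⋃ n, K n = univ) {ω : Ω}
    {i : ℕ} (hω : ω ∉ K (i + 1)) : ∃ j, i ≤ j ∧ ω ∈ K (j + 2) \ interior (K (j + 1)) := by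
  classical
  have hex : ∃ n, ω ∈ K n := mem_iUnion.1 (hKu ▸ mem_univ ω)
  have hmin : i + 2 ≤ Nat.find hex := by
    by_contra! h
    exact hω (hK (Nat.lt_succ_iff.1 h) (Nat.find_spec hex))
  obtain ⟨j, hj⟩ : ∃ j, Nat.find hex = j + 2 := ⟨Nat.find hex - 2, by omega⟩
  refine ⟨j, by omega, hj ▸ Nat.find_spec hex, fun h => ?_⟩
  exact Nat.find_min hex (by omega) (interior_subset h)

lemma IsCompact.exists_subset_of_subset_interior {L : Set Ω} (hL : IsCompact L)
    (hK : ∀ n, K n ⊆ interior (K (n + 1))) (hKu : ⋃ n, K n = univ) : ∃ n, L ⊆ K n := by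
  have hcover : L ⊆ ⋃ n, interior (K n) := fun ω _ =>
    have ⟨n, hn⟩ := mem_iUnion.1 (hKu ▸ mem_univ ω)
    mem_iUnion.2 ⟨n + 1, hK n hn⟩
  have hdir : Directed (· ⊆ ·) fun n => interior (K n) :=
    Monotone.directed_le fun _ _ h => interior_mono (monotone_of_subset_interior hK h)
  obtain ⟨n, hn⟩ := hL.elim_directed_cover _ (fun _ => isOpen_interior) hcover hdir
  exact ⟨n, hn.trans interior_subset⟩

lemma properFn_of_lt_of_notMem (hK : ∀ n, IsCompact (K n)) {p : Ω → ℝ} (hp : Continuous p)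
    (hlow : ∀ (i : ℕ) ω, ω ∉ K (i + 1) → (i : ℝ) < p ω) : ProperFn p := by
  intro S hS
  obtain ⟨b, hb⟩ := hS.bddAbove
  refine (hK (⌈b⌉₊ + 1)).of_isClosed_subset (hS.isClosed.preimage hp) fun ω hω => ?_
  by_contra h
  linarith [hlow _ ω h, hb hω, Nat.le_ceil b]

lemma continuous_ciSup_of_level (hK : ∀ n, K n ⊆ interior (K (n + 1))) (hKu : ⋃ n, K n = univ)
    (hr : ∀ x ω, 0 ≤ r x ω) (hrK : ∀ x, ∀ ω ∈ K (level x), r x ω = 0)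
    (hfin : ∀ n, {x | level x < n}.Finite) (hrc : ∀ x, Continuous (r x)) :
    Continuous fun ω => ⨆ x, r x ω := by
  refine continuous_iff_continuousAt.2 fun ω => ?_
  obtain ⟨n, hn⟩ := mem_iUnion.1 (hKu ▸ mem_univ ω)
  have := (hfin (n + 1)).to_subtype
  refine (continuous_ciSup_of_finite fun x : {x | level x < n + 1} => hrc x).continuousAt.congr ?_
  filter_upwards [isOpen_interior.mem_nhds (hK n hn)] with y hy
  exact (ciSup_eq_ciSup_level_lt_of_mem (monotone_of_subset_interior hK) hr hrK (hfin _)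
    (interior_subset hy)).symm

lemma lt_ciSup_of_notMem (hK : Monotone K) (hKu : ⋃ n, K n = univ)
    (hrK : ∀ x, ∀ ω ∈ K (level x), r x ω = 0) (hfin : ∀ n, {x | level x < n}.Finite)
    (hbig : ∀ (i : ℕ), ∀ ω ∈ K (i + 2) \ interior (K (i + 1)), ∃ x, (i : ℝ) < r x ω)
    {i : ℕ} {ω : Ω} (hω : ω ∉ K (i + 1)) : (i : ℝ) < ⨆ x, r x ω := by
  obtain ⟨j, hij, hj⟩ := exists_mem_diff_interior_of_notMem hK hKu hω
  obtain ⟨x, hx⟩ := hbig j ω hj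
  calc (i : ℝ) ≤ j := Nat.cast_le.2 hij
    _ < r x ω := hx
    _ ≤ ⨆ x, r x ω := le_ciSup (bddAbove_range_apply_of_level hK hKu hrK hfin ω) x

end Exhaustion

theorem stmt14_general {Ω : Type} [TopologicalSpace Ω] (F : Set (Ω → ℝ))
    (hcone : IsConvexConeFn F) (hcont : ∀ f ∈ F, Continuous f)
    (hconst : ∀ c : ℝ, (fun _ : Ω => c) ∈ F)
    (K : ℕ → Set Ω) (hK : ∀ i, IsCompact (K i)) (hKc : ∀ i, FConvexSet F (K i))
    (hKi : ∀ i, K i ⊂ interior (K (i + 1))) (hKu : (⋃ i, K i) = Set.univ) :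
    ∃ p : Ω → ℝ, Continuous p ∧ ProperFn p ∧ (∀ ω, 0 ≤ p ω) ∧
      (fun ω => ((p ω : ℝ) : EReal)) ∈ genCLC F ∧
      ∀ L : Set Ω, IsCompact L →
        ∃ (n : ℕ) (g : Fin n → Ω → ℝ),
          (∀ i, ∃ f ∈ F, ∃ α β : ℝ, ∀ ω, g i ω = max (α * f ω + β) 0) ∧
          ∀ ω ∈ L, p ω = ⨆ i : Fin n, g i ω := by
  have hKint : ∀ i, K i ⊆ interior (K (i + 1)) := fun i => (hKi i).subset
  have hmono := monotone_of_subset_interior hKint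
  choose s hs hs_big using fun i => (hKc i).exists_finset_isRamp hcont
    ((hK (i + 2)).diff isOpen_interior)
    (disjoint_left.2 fun ω hω hωK => hω.2 (hKint i hωK)) i
  let r : (Σ i, s i) → Ω → ℝ := fun x => x.2.1
  have hr : ∀ x ω, 0 ≤ r x ω := fun x => (hs _ _ x.2.2).1.nonneg
  have hrK : ∀ x, ∀ ω ∈ K x.1, r x ω = 0 := fun x => (hs _ _ x.2.2).2
  have hbig : ∀ (i : ℕ), ∀ ω ∈ K (i + 2) \ interior (K (i + 1)), ∃ x, (i : ℝ) < r x ω :=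
    fun i ω hω => have ⟨g, hg, hgω⟩ := hs_big i ω hω; ⟨⟨i, g, hg⟩, hgω⟩
  have hfin := finite_setOf_sigma_fst_lt (α := fun i => s i)
  have hpc := continuous_ciSup_of_level hKint hKu hr hrK hfin fun x =>
    (hs _ _ x.2.2).1.continuous hcont
  refine ⟨fun ω => ⨆ x, r x ω, hpc,
    properFn_of_lt_of_notMem hK hpc fun i ω => lt_ciSup_of_notMem hmono hKu hrK hfin hbig,
    fun ω => Real.iSup_nonneg (hr · ω),
    coe_ciSup_mem_genCLC (hconst 0) (fun x => (hs _ _ x.2.2).1.coe_mem_genCLC hcone hconst)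
      (bddAbove_range_apply_of_level hmono hKu hrK hfin), fun L hL => ?_⟩
  obtain ⟨n, hLn⟩ := hL.exists_subset_of_subset_interior hKint hKu
  have := (hfin n).to_subtype
  obtain ⟨m, ⟨e⟩⟩ := Finite.exists_equiv_fin {x : Σ i, s i | x.1 < n}
  refine ⟨m, fun j => r (e.symm j), fun j => ?_, fun ω hω => ?_⟩
  · obtain ⟨f, hf, α, β, -, hg⟩ := (hs _ _ (e.symm j).1.2.2).1
    exact ⟨f, hf, α, β, hg⟩
  · exact (ciSup_eq_ciSup_level_lt_of_mem hmono hr hrK (hfin n) (hLn hω)).trans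
      (e.symm.iSup_comp (g := fun x : {x : Σ i, s i | x.1 < n} => r x ω)).symm

/-- The exhaustion lemma: given a sequence of compact `F`-convex sets
`K i ⊊ int K (i+1)` with `⋃ K i = Ω`, there is a continuous, proper,
non-negative `p` in the complete lattice cone generated by `F` that on each
compact set is the maximum of finitely many functions of the form
`max (α·f + β) 0` with `f ∈ F`. -/
theorem stmt14 {Ω : Type} [TopologicalSpace Ω] (F : Set (Ω → ℝ))
    (hcone : IsConvexConeFn F) (hcont : ∀ f ∈ F, Continuous f)
    (hconst : ∀ c : ℝ, (fun _ : Ω => c) ∈ F) (hmax : MaxPrin F)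
    (K : ℕ → Set Ω) (hK : ∀ i, IsCompact (K i)) (hKc : ∀ i, FConvexSet F (K i))
    (hKi : ∀ i, K i ⊂ interior (K (i + 1))) (hKu : (⋃ i, K i) = Set.univ) :
    ∃ p : Ω → ℝ, Continuous p ∧ ProperFn p ∧ (∀ ω, 0 ≤ p ω) ∧
      (fun ω => ((p ω : ℝ) : EReal)) ∈ genCLC F ∧
      ∀ L : Set Ω, IsCompact L →
        ∃ (n : ℕ) (g : Fin n → Ω → ℝ),
          (∀ i, ∃ f ∈ F, ∃ α β : ℝ, ∀ ω, g i ω = max (α * f ω + β) 0) ∧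
          ∀ ω ∈ L, p ω = ⨆ i : Fin n, g i ω :=
  stmt14_general F hcone hcont hconst K hK hKc hKi hKu
end

section
/- Let Ω be a locally compact, σ-compact Hausdorff space and 𝒜 an algebra of continuous real-valued functions on Ω, containing constants and closed in the compact-open topology, such that Ω is ℱ-convex for the complete lattice cone ℱ generated by 𝒜. Then for every net (ω_α) in Ω with no accumulation point in Ω, there exist a ∈ 𝒜 and a subsequence (ω_j) of the net such that a(ω_j) → ∞. -/
/-!
A function of the complete lattice cone generated by `𝒜` is, at every point, the supremum of
the members of `𝒜` lying below it. Hence a point `ω` outside the `ℱ`-hull of a compact `K` is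
separated from `K` by some `a ∈ 𝒜`: `a ≤ r` on `K` and `r < a ω`. Since `𝒜` is closed and
polynomials approximate continuous functions locally uniformly, `𝒜` is stable under
composition with `t ↦ c · max (t - r) 0`, which turns `a` into `b ≥ 0` vanishing on `K` with
`b ω` as large as we like. A net without cluster points leaves every compact set, in particular
the compact hull of each `K n` of a compact exhaustion; picking `ω n = x (φ n)` there and `b n`
as above with `n < b n (ω n)`, the series `∑ b n` is locally finite, so it converges in the
compact-open topology to some `a ∈ 𝒜`, and `a (ω n) ≥ b n (ω n) > n`.
-/

open Filter Topology Set

open Polynomial in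
theorem Polynomial.exists_tendsto_toContinuousMap (g : C(ℝ, ℝ)) :
    ∃ q : ℕ → ℝ[X], Tendsto (fun n => (q n).toContinuousMap) atTop (𝓝 g) := by
  choose q hq using fun n : ℕ => exists_polynomial_near_of_continuousOn (-n) n g
    g.continuous.continuousOn (1 / (n + 1)) (by positivity)
  refine ⟨q, ContinuousMap.tendsto_iff_forall_isCompact_tendstoUniformlyOn.2 fun K hK => ?_⟩
  obtain ⟨R, hR⟩ := hK.isBounded.subset_closedBall 0
  refine Metric.tendstoUniformlyOn_iff.2 fun ε hε => ?_
  filter_upwards [tendsto_natCast_atTop_atTop.eventually_ge_atTop R,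
    tendsto_one_div_add_atTop_nhds_zero_nat.eventually_lt_const hε] with n hRn hεn t ht
  have htn : t ∈ Icc (-n : ℝ) n := abs_le.1 <| by
    simpa [Real.dist_eq] using (Metric.mem_closedBall.1 (hR ht)).trans hRn
  rw [dist_comm, Real.dist_eq]
  exact (hq n t htn).trans hεn

open Polynomial in
theorem Subalgebra.comp_mem_of_isClosed {X : Type*} [TopologicalSpace X]
    {A : Subalgebra ℝ C(X, ℝ)} (hA : IsClosed (A : Set C(X, ℝ))) {a : C(X, ℝ)} (ha : a ∈ A)
    (g : C(ℝ, ℝ)) : g.comp a ∈ A := by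
  obtain ⟨q, hq⟩ := Polynomial.exists_tendsto_toContinuousMap g
  refine hA.mem_of_tendsto (((ContinuousMap.continuous_precomp a).tendsto g).comp hq)
    (Eventually.of_forall fun n => ?_)
  have hqa : (q n).toContinuousMap.comp a = aeval a (q n) := by
    ext; simp [aeval_continuousMap_apply]
  simpa [hqa] using (aeval (⟨a, ha⟩ : A) (q n)).2

section LowerApprox

variable {X : Type} [TopologicalSpace X]

/-- Functions `f` that are, at every point, the supremum of the members of `A` lying below `f`. -/
def lowerApprox (A : Set C(X, ℝ)) : Set (X → EReal) :=
  {f | ∀ x (r : EReal), r < f x → ∃ a ∈ A, r < a x ∧ ∀ y, (a y : EReal) ≤ f y}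

theorem smul_mem_lowerApprox (A : Submodule ℝ C(X, ℝ)) {f : X → EReal}
    (hf : f ∈ lowerApprox (A : Set C(X, ℝ))) {α : ℝ} (hα : 0 ≤ α) :
    (fun x => (α : EReal) * f x) ∈ lowerApprox (A : Set C(X, ℝ)) := by
  intro x r hr
  rcases hα.eq_or_lt with rfl | hα
  · exact ⟨0, A.zero_mem, by simpa using hr, fun y => by simp⟩
  have hα' : (0 : EReal) < α := by exact_mod_cast hα
  obtain ⟨a, ha, hra, haf⟩ :=
    hf x (r / α) ((EReal.div_lt_iff hα' (EReal.coe_ne_top α)).2 (by rwa [mul_comm]))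
  refine ⟨α • a, A.smul_mem α ha, ?_, fun y => ?_⟩
  · simpa [mul_comm] using (EReal.div_lt_iff hα' (EReal.coe_ne_top α)).1 hra
  · simpa using mul_le_mul_of_nonneg_left (haf y) hα'.le

theorem add_mem_lowerApprox (A : Submodule ℝ C(X, ℝ)) {f g : X → EReal}
    (hf : f ∈ lowerApprox (A : Set C(X, ℝ))) (hg : g ∈ lowerApprox (A : Set C(X, ℝ))) :
    (fun x => f x + g x) ∈ lowerApprox (A : Set C(X, ℝ)) := by
  intro x r hr
  obtain ⟨p, hp, q, hq, hpq⟩ : ∃ p < f x, ∃ q < g x, r < p + q := by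
    by_contra! h
    exact hr.not_ge (EReal.add_le_of_forall_lt h)
  obtain ⟨a, ha, hpa, haf⟩ := hf x p hp
  obtain ⟨b, hb, hqb, hbg⟩ := hg x q hq
  refine ⟨a + b, A.add_mem ha hb, ?_, fun y => ?_⟩
  · simpa using hpq.trans_le (add_le_add hpa.le hqb.le)
  · simpa using add_le_add (haf y) (hbg y)

theorem iSup_mem_lowerApprox (A : Set C(X, ℝ)) {ι : Type} {F : ι → X → EReal}
    (hF : ∀ i, F i ∈ lowerApprox A) : (fun x => ⨆ i, F i x) ∈ lowerApprox A := by
  intro x r hr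
  obtain ⟨i, hi⟩ := lt_iSup_iff.1 hr
  obtain ⟨a, ha, hra, haF⟩ := hF i x r hi
  exact ⟨a, ha, hra, fun y => (haF y).trans (le_iSup (fun i => F i y) i)⟩

theorem isCLC_lowerApprox (A : Submodule ℝ C(X, ℝ)) : IsCLC (lowerApprox (A : Set C(X, ℝ))) :=
  ⟨fun _ hf _ hg _ _ hα hβ =>
      add_mem_lowerApprox A (smul_mem_lowerApprox A hf hα) (smul_mem_lowerApprox A hg hβ),
    fun _ _ => iSup_mem_lowerApprox _⟩

theorem genCLC_subset_lowerApprox (A : Submodule ℝ C(X, ℝ)) :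
    genCLC {g : X → ℝ | ∃ a ∈ A, g = fun x => a x} ⊆ lowerApprox (A : Set C(X, ℝ)) :=
  fun _ hf => hf _ ⟨isCLC_lowerApprox A, by
    rintro _ ⟨a, ha, rfl⟩ x r hr
    exact ⟨a, ha, hr, fun _ => le_rfl⟩⟩

theorem exists_lt_of_mem_lowerApprox {A : Set C(X, ℝ)} {f : X → EReal}
    (hf : f ∈ lowerApprox A) {K : Set X} {ω : X} (hω : ¬ f ω ≤ ⨆ k ∈ K, f k) :
    ∃ a ∈ A, ∃ r : ℝ, (∀ k ∈ K, a k ≤ r) ∧ r < a ω := by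
  obtain ⟨r, hKr, hrω⟩ := EReal.exists_between_coe_real (not_le.1 hω)
  obtain ⟨a, ha, hra, haf⟩ := hf ω r hrω
  refine ⟨a, ha, r, fun k hk => ?_, EReal.coe_lt_coe_iff.1 hra⟩
  exact EReal.coe_le_coe_iff.1 ((haf k).trans ((le_biSup f hk).trans hKr.le))

end LowerApprox

section ClcHull

variable {X : Type} [TopologicalSpace X]

theorem Subalgebra.exists_nonneg_eqOn_zero_lt {A : Subalgebra ℝ C(X, ℝ)}
    (hA : IsClosed (A : Set C(X, ℝ))) {a : C(X, ℝ)} (ha : a ∈ A) {K : Set X} {ω : X} {r : ℝ}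
    (hK : ∀ k ∈ K, a k ≤ r) (hω : r < a ω) (M : ℝ) :
    ∃ b ∈ A, 0 ≤ b ∧ EqOn b 0 K ∧ M < b ω := by
  set c := (|M| + 1) / (a ω - r)
  let g : C(ℝ, ℝ) := ⟨fun t => c * max (t - r) 0, by fun_prop⟩
  refine ⟨g.comp a, A.comp_mem_of_isClosed hA ha g, fun y => ?_, fun k hk => ?_, ?_⟩
  · show 0 ≤ c * max (a y - r) 0
    have : 0 < a ω - r := sub_pos.2 hω
    positivity
  · show c * max (a k - r) 0 = 0
    rw [max_eq_right (sub_nonpos.2 (hK k hk)), mul_zero]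
  · show M < c * max (a ω - r) 0
    rw [max_eq_left (sub_pos.2 hω).le, div_mul_cancel₀ _ (sub_pos.2 hω).ne']
    linarith [le_abs_self M]

/-- The `ℱ`-convex hull of `K`, for `ℱ` the complete lattice cone generated by `A`. -/
def clcHull (A : Subalgebra ℝ C(X, ℝ)) (K : Set X) : Set X :=
  {ω | ∀ f ∈ genCLC {g : X → ℝ | ∃ a ∈ A, g = fun ω => a ω}, f ω ≤ ⨆ k ∈ K, f k}

theorem exists_nonneg_eqOn_zero_lt_of_notMem_clcHull {A : Subalgebra ℝ C(X, ℝ)}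
    (hA : IsClosed (A : Set C(X, ℝ))) {K : Set X} {ω : X} (hω : ω ∉ clcHull A K) (M : ℝ) :
    ∃ b ∈ A, 0 ≤ b ∧ EqOn b 0 K ∧ M < b ω := by
  obtain ⟨f, hf, hfω⟩ : ∃ f ∈ genCLC {g : X → ℝ | ∃ a ∈ A, g = fun ω => a ω},
      ¬ f ω ≤ ⨆ k ∈ K, f k := by
    simpa [clcHull] using hω
  obtain ⟨a, ha, r, hK, hr⟩ :=
    exists_lt_of_mem_lowerApprox (genCLC_subset_lowerApprox A.toSubmodule hf) hfω
  exact A.exists_nonneg_eqOn_zero_lt hA ha hK hr M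

end ClcHull

theorem ContinuousMap.summable_of_eventually_eqOn_zero {X Y ι : Type*} [TopologicalSpace X]
    [WeaklyLocallyCompactSpace X] [TopologicalSpace Y] [T2Space Y] [AddCommMonoid Y]
    [ContinuousAdd Y] {a : ι → C(X, Y)}
    (h : ∀ K, IsCompact K → ∀ᶠ i in cofinite, EqOn (a i) 0 K) : Summable a := by
  refine (ContinuousMap.exists_tendsto_compactOpen_iff_forall _).2 fun K hK => ?_
  set s := (eventually_cofinite.1 (h K hK)).toFinset
  refine ⟨(∑ i ∈ s, a i).restrict K, tendsto_nhds_of_eventually_eq ?_⟩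
  filter_upwards [eventually_ge_atTop s] with t hst
  ext ⟨y, hy⟩
  simp only [restrict_apply, coe_sum, Finset.sum_apply]
  exact (Finset.sum_subset hst fun i _ hi => by
    simp only [s, Finite.mem_toFinset, mem_ofPred_eq, not_not] at hi
    exact hi hy).symm

theorem ContinuousMap.apply_le_tsum_apply {X ι : Type*} [TopologicalSpace X] {a : ι → C(X, ℝ)}
    (hs : Summable a) (h0 : ∀ i, 0 ≤ a i) (i : ι) (y : X) : a i y ≤ (∑' i, a i) y := by
  rw [← ContinuousMap.tsum_apply hs]
  exact (hs.map (ContinuousMap.evalCLM ℝ y) (ContinuousMap.evalCLM ℝ y).continuous).le_tsum i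
    fun j _ => h0 j y

theorem IsCompact.exists_apply_notMem {X ι : Type*} [TopologicalSpace X] {l : Filter ι} [l.NeBot]
    {x : ι → X} (hx : ∀ ω, ¬ MapClusterPt ω l x) {C : Set X} (hC : IsCompact C) :
    ∃ i, x i ∉ C := by
  by_contra! h
  obtain ⟨ω, -, hω⟩ := hC.exists_mapClusterPt (f := l) (u := x)
    (le_principal_iff.2 (mem_map.2 (univ_mem' h)))
  exact hx ω hω

theorem stmt18_general {Ω : Type} [TopologicalSpace Ω] [SigmaCompactSpace Ω]
    [WeaklyLocallyCompactSpace Ω]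
    (A : Subalgebra ℝ C(Ω, ℝ)) (hclosed : IsClosed (A : Set C(Ω, ℝ)))
    (hconv : ∀ K : Set Ω, IsCompact K →
      IsCompact {ω | ∀ f ∈ genCLC {g : Ω → ℝ | ∃ a ∈ A, g = fun ω => a ω},
        f ω ≤ ⨆ k ∈ K, f k})
    (ι : Type) [Preorder ι] [Nonempty ι] [IsDirected ι (· ≤ ·)]
    (x : ι → Ω) (hx : ∀ ω : Ω, ¬ MapClusterPt ω atTop x) :
    ∃ a ∈ A, ∃ φ : ℕ → ι, Tendsto (fun j => a (x (φ j))) atTop atTop := by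
  let E := CompactExhaustion.choice Ω
  choose φ hφ using fun n => (hconv (E n) (E.isCompact n)).exists_apply_notMem hx
  choose a haA ha0 haE haφ using fun n : ℕ =>
    exists_nonneg_eqOn_zero_lt_of_notMem_clcHull hclosed (hφ n) n
  have hsum : Summable a := ContinuousMap.summable_of_eventually_eqOn_zero fun K hK => by
    obtain ⟨N, hN⟩ := E.exists_superset_of_isCompact hK
    rw [Nat.cofinite_eq_atTop]
    filter_upwards [eventually_ge_atTop N] with n hn
    exact (haE n).mono (hN.trans (E.subset hn))
  refine ⟨∑' n, a n, tsum_mem hclosed haA, φ, tendsto_atTop_mono (fun n => ?_)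
    tendsto_natCast_atTop_atTop⟩
  exact (haφ n).le.trans (ContinuousMap.apply_le_tsum_apply hsum ha0 n _)

/-- Let `𝒜` be a closed (compact-open topology) algebra of continuous
functions on a locally compact σ-compact Hausdorff space `Ω` such that `Ω` is
`ℱ`-convex for the complete lattice cone `ℱ` generated by `𝒜`. Then along any
net with no accumulation point there are a function `a ∈ 𝒜` and a subsequence
of the net on which `a` tends to `∞`. -/
theorem stmt18 {Ω : Type} [TopologicalSpace Ω] [T2Space Ω] [SigmaCompactSpace Ω]
    [WeaklyLocallyCompactSpace Ω]
    (A : Subalgebra ℝ C(Ω, ℝ)) (hclosed : IsClosed (A : Set C(Ω, ℝ)))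
    (hconv : ∀ K : Set Ω, IsCompact K →
      IsCompact {ω | ∀ f ∈ genCLC {g : Ω → ℝ | ∃ a ∈ A, g = fun ω => a ω},
        f ω ≤ ⨆ k ∈ K, f k})
    (ι : Type) [Preorder ι] [Nonempty ι] [IsDirected ι (· ≤ ·)]
    (x : ι → Ω) (hx : ∀ ω : Ω, ¬ MapClusterPt ω atTop x) :
    ∃ a ∈ A, ∃ φ : ℕ → ι, Tendsto (fun j => a (x (φ j))) atTop atTop :=
  stmt18_general A hclosed hconv ι x hx
end
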